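/- If 0 < ω < ω_{p,q}, then there exist real numbers 0 < b < c such that f(u) < 0 for u ∈ (0,b), f(b) = 0, f(u) > 0 for u ∈ (b,c), f(c) = 0, and f(u) < 0 for u ∈ (c,∞). -/

import Mathlib

/-- The double power nonlinearity `f(u) = -ω u + u^p - u^q`. -/
noncomputable def f (ω p q u : ℝ) : ℝ := -ω * u + u ^ p - u ^ q

/-- The critical frequency `ω_{p,q}`. -/
noncomputable def omegaPQ (p q : ℝ) : ℝ :=
  (2 * (q - p) / ((p + 1) * (q - 1))) *
    (((p - 1) * (q + 1)) / ((p + 1) * (q - 1))) ^ ((p - 1) / (q - p))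

/-!
For `u > 0` we have `f(u) = u (g(u) - ω)` with `g(u) = u^(p-1) - u^(q-1)`. Since
`g'(u) = u^(p-2) ((p-1) - (q-1) u^(q-p))`, the function `g` increases strictly up to its peak
`u₀ = ((p-1)/(q-1))^(1/(q-p))` and decreases strictly afterwards, with `g(0) = g(1) = 0`.
The constant `ω_{p,q}` is a value of `g` (at `u = k^(1/(q-p))` with
`k = (p-1)(q+1)/((p+1)(q-1))`), so `ω < ω_{p,q} ≤ g(u₀)`, and the level `ω` is crossed exactly
once on each side of the peak.
-/

open Real Set

theorem exists_level_crossings_of_unimodal {g : ℝ → ℝ} {s R ω : ℝ} (hs : 0 ≤ s) (hsR : s ≤ R)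
    (hg : ContinuousOn g (Icc 0 R)) (hmono : StrictMonoOn g (Icc 0 s))
    (hanti : StrictAntiOn g (Ici s)) (h0 : g 0 < ω) (hR : g R < ω) (hω : ω < g s) :
    ∃ b c, 0 < b ∧ b < s ∧ s < c ∧ g b = ω ∧ g c = ω ∧
      (∀ u, 0 ≤ u → u < b → g u < ω) ∧ (∀ u, b < u → u < c → ω < g u) ∧
      ∀ u, c < u → g u < ω := by
  obtain ⟨b, ⟨hb0, hbs⟩, hgb⟩ :=
    intermediate_value_Ioo hs (hg.mono (Icc_subset_Icc_right hsR)) ⟨h0, hω⟩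
  obtain ⟨c, ⟨hsc, -⟩, hgc⟩ :=
    intermediate_value_Ioo' hsR (hg.mono (Icc_subset_Icc_left hs)) ⟨hR, hω⟩
  refine ⟨b, c, hb0, hbs, hsc, hgb, hgc, ?_, ?_, ?_⟩
  · intro u hu hub
    exact hgb ▸ hmono ⟨hu, (hub.trans hbs).le⟩ ⟨hb0.le, hbs.le⟩ hub
  · intro u hbu huc
    rcases le_total u s with hus | hsu
    · exact hgb ▸ hmono ⟨hb0.le, hbs.le⟩ ⟨hb0.le.trans hbu.le, hus⟩ hbu
    · exact hgc ▸ hanti hsu (mem_Ici.2 hsc.le) huc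
  · intro u hcu
    exact hgc ▸ hanti (mem_Ici.2 hsc.le) (mem_Ici.2 (hsc.trans hcu).le) hcu

noncomputable def rpowDiff (α β x : ℝ) : ℝ := x ^ α - x ^ β

noncomputable def rpowDiffPeak (α β : ℝ) : ℝ := (α / β) ^ (β - α)⁻¹

namespace rpowDiff

variable {α β : ℝ}

theorem continuous (hα : 0 < α) (hβ : 0 < β) : Continuous (rpowDiff α β) :=
  (continuous_rpow_const hα.le).sub (continuous_rpow_const hβ.le)

theorem hasDerivAt {u : ℝ} (hu : 0 < u) :
    HasDerivAt (rpowDiff α β) (u ^ (α - 1) * (α - β * u ^ (β - α))) u := by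
  refine ((hasDerivAt_rpow_const (Or.inl hu.ne')).sub
    (hasDerivAt_rpow_const (Or.inl hu.ne'))).congr_deriv ?_
  rw [mul_sub, mul_left_comm, ← rpow_add hu]
  ring_nf

theorem peak_pos (hα : 0 < α) (hαβ : α < β) : 0 < rpowDiffPeak α β :=
  rpow_pos_of_pos (div_pos hα (hα.trans hαβ)) _

theorem peak_lt_one (hα : 0 < α) (hαβ : α < β) : rpowDiffPeak α β < 1 :=
  rpow_lt_one (div_pos hα (hα.trans hαβ)).le ((div_lt_one (hα.trans hαβ)).2 hαβ)
    (inv_pos.2 (sub_pos.2 hαβ))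

theorem strictMonoOn (hα : 0 < α) (hαβ : α < β) :
    StrictMonoOn (rpowDiff α β) (Icc 0 (rpowDiffPeak α β)) := by
  have hβ : 0 < β := hα.trans hαβ
  refine strictMonoOn_of_deriv_pos (convex_Icc _ _) (continuous hα hβ).continuousOn ?_
  intro u hu
  rw [interior_Icc] at hu
  obtain ⟨hu, hu_peak⟩ := hu
  rw [(hasDerivAt hu).deriv]
  have hlt : u ^ (β - α) < α / β :=
    (lt_rpow_inv_iff_of_pos hu.le (div_pos hα hβ).le (sub_pos.2 hαβ)).1 hu_peak
  have : β * u ^ (β - α) < α := (lt_div_iff₀' hβ).1 hlt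
  exact mul_pos (rpow_pos_of_pos hu _) (sub_pos.2 this)

theorem strictAntiOn (hα : 0 < α) (hαβ : α < β) :
    StrictAntiOn (rpowDiff α β) (Ici (rpowDiffPeak α β)) := by
  have hβ : 0 < β := hα.trans hαβ
  refine strictAntiOn_of_deriv_neg (convex_Ici _) (continuous hα hβ).continuousOn ?_
  intro u hu_peak
  rw [interior_Ici, mem_Ioi] at hu_peak
  have hu : 0 < u := (peak_pos hα hαβ).trans hu_peak
  rw [(hasDerivAt hu).deriv]
  have hlt : α / β < u ^ (β - α) :=
    (rpow_inv_lt_iff_of_pos (div_pos hα hβ).le hu.le (sub_pos.2 hαβ)).1 hu_peak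
  have : α < β * u ^ (β - α) := (div_lt_iff₀' hβ).1 hlt
  exact mul_neg_of_pos_of_neg (rpow_pos_of_pos hu _) (sub_neg.2 this)

theorem le_peak (hα : 0 < α) (hαβ : α < β) {x : ℝ} (hx : 0 ≤ x) :
    rpowDiff α β x ≤ rpowDiff α β (rpowDiffPeak α β) := by
  have hpeak := (peak_pos hα hαβ).le
  rcases le_total x (rpowDiffPeak α β) with h | h
  · exact (strictMonoOn hα hαβ).monotoneOn ⟨hx, h⟩ ⟨hpeak, le_rfl⟩ h
  · exact (strictAntiOn hα hαβ).antitoneOn self_mem_Ici h h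

theorem self_add_rpow_inv {t k : ℝ} (hk : 0 < k) (ht : t ≠ 0) :
    rpowDiff α (α + t) (k ^ t⁻¹) = k ^ (α / t) * (1 - k) := by
  have hexp : t⁻¹ * (α + t) = α / t + 1 := by field_simp
  rw [rpowDiff, ← rpow_mul hk.le, ← rpow_mul hk.le, hexp, rpow_add hk, rpow_one]
  ring_nf

end rpowDiff

theorem omegaPQ_le_rpowDiff_peak {p q : ℝ} (hp : 1 < p) (hpq : p < q) :
    omegaPQ p q ≤ rpowDiff (p - 1) (q - 1) (rpowDiffPeak (p - 1) (q - 1)) := by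
  have hq : 1 < q := hp.trans hpq
  set k := ((p - 1) * (q + 1)) / ((p + 1) * (q - 1))
  have hk : 0 < k := div_pos (by nlinarith) (by nlinarith)
  have hk_compl : 1 - k = 2 * (q - p) / ((p + 1) * (q - 1)) := by
    have : p + 1 ≠ 0 := by linarith
    have : q - 1 ≠ 0 := by linarith
    simp only [k]
    field_simp
    ring
  have hvalue : omegaPQ p q = rpowDiff (p - 1) (q - 1) (k ^ (q - p)⁻¹) := by
    rw [show q - 1 = (p - 1) + (q - p) by ring,
      rpowDiff.self_add_rpow_inv hk (sub_pos.2 hpq).ne', hk_compl, omegaPQ, mul_comm]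
  rw [hvalue]
  exact rpowDiff.le_peak (by linarith) (by linarith) (rpow_nonneg hk.le _)

theorem f_eq_mul_rpowDiff_sub (ω p q : ℝ) {u : ℝ} (hu : 0 < u) :
    f ω p q u = u * (rpowDiff (p - 1) (q - 1) u - ω) := by
  rw [f, rpowDiff, rpow_sub_one hu.ne', rpow_sub_one hu.ne']
  field_simp
  ring

/-- If `0 < ω < ω_{p,q}`, then there exist `0 < b < c` such that `f < 0` on `(0,b)`,
`f(b) = 0`, `f > 0` on `(b,c)`, `f(c) = 0`, and `f < 0` on `(c,∞)`. -/
theorem f_sign_structure (p q ω : ℝ) (hp : 1 < p) (hpq : p < q) (hω : 0 < ω)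
    (hωpq : ω < omegaPQ p q) :
    ∃ b c : ℝ, 0 < b ∧ b < c ∧
      (∀ u, 0 < u → u < b → f ω p q u < 0) ∧
      f ω p q b = 0 ∧
      (∀ u, b < u → u < c → 0 < f ω p q u) ∧
      f ω p q c = 0 ∧
      (∀ u, c < u → f ω p q u < 0) := by
  have hα : 0 < p - 1 := by linarith
  have hαβ : p - 1 < q - 1 := by linarith
  have hβ : 0 < q - 1 := hα.trans hαβ
  have hpeak_pos := rpowDiff.peak_pos hα hαβ
  obtain ⟨b, c, hb, hbs, hsc, hgb, hgc, hlow, hmid, hhigh⟩ :=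
    exists_level_crossings_of_unimodal hpeak_pos.le (rpowDiff.peak_lt_one hα hαβ).le
      (rpowDiff.continuous hα hβ).continuousOn (rpowDiff.strictMonoOn hα hαβ)
      (rpowDiff.strictAntiOn hα hαβ) (by simpa [rpowDiff, hα.ne', hβ.ne'] using hω)
      (by simpa [rpowDiff] using hω) (hωpq.trans_le (omegaPQ_le_rpowDiff_peak hp hpq))
  have hc : 0 < c := hpeak_pos.trans hsc
  refine ⟨b, c, hb, hbs.trans hsc, fun u hu hub => ?_, ?_, fun u hbu huc => ?_, ?_,
    fun u hcu => ?_⟩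
  · rw [f_eq_mul_rpowDiff_sub ω p q hu]
    exact mul_neg_of_pos_of_neg hu (sub_neg.2 (hlow u hu.le hub))
  · rw [f_eq_mul_rpowDiff_sub ω p q hb, hgb, sub_self, mul_zero]
  · have hu := hb.trans hbu
    rw [f_eq_mul_rpowDiff_sub ω p q hu]
    exact mul_pos hu (sub_pos.2 (hmid u hbu huc))
  · rw [f_eq_mul_rpowDiff_sub ω p q hc, hgc, sub_self, mul_zero]
  · have hu := hc.trans hcu
    rw [f_eq_mul_rpowDiff_sub ω p q hu]
    exact mul_neg_of_pos_of_neg hu (sub_neg.2 (hhigh u hcu))
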